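/- arXiv:1411.7047 — 7 statements merged into one kernel-verified Lean document; each statement's English description precedes it below -/
import Mathlib

section
/- Let G be a group, V an inner product space over a field k of characteristic 0, and α : G → Aut(V) a representation such that each α(g) admits an adjoint α*(g) with respect to the inner product, and [α(g₁), α*(g₂)] = 0 for all g₁, g₂ ∈ G. Then ρ(g) := α(g) ∘ (α*(g))⁻¹ defines a unitary representation of G on V, i.e. ρ is a group homomorphism and each ρ(g) preserves the inner product. -/
/-- If `α : G → Aut(V)` is a representation on an inner product space
(symmetric non-degenerate bilinear form `B`) such that each `α g` admits an adjoint
`αs g` and `[α g₁, αs g₂] = 0`, then `ρ g := α g ∘ (αs g)⁻¹ = α g ∘ αs g⁻¹` is a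
unitary representation: a group homomorphism preserving the inner product. -/
theorem curved_gauge_stmt0 {k V : Type*} [Field k] [CharZero k]
    [AddCommGroup V] [Module k V] {G : Type*} [Group G]
    (B : V →ₗ[k] V →ₗ[k] k)
    (Bsymm : ∀ x y : V, B x y = B y x)
    (Bnondeg : ∀ x : V, (∀ y : V, B x y = 0) → x = 0)
    (α αs : G → Module.End k V)
    (hα1 : α 1 = 1)
    (hαmul : ∀ g h : G, α (g * h) = α g * α h)
    (hadj : ∀ (g : G) (x y : V), B (α g x) y = B x (αs g y))
    (hcomm : ∀ g₁ g₂ : G, α g₁ * αs g₂ = αs g₂ * α g₁) :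
    (∀ g h : G, α (g * h) * αs (g * h)⁻¹ = (α g * αs g⁻¹) * (α h * αs h⁻¹)) ∧
    (α 1 * αs (1 : G)⁻¹ = 1) ∧
    (∀ (g : G) (x y : V), B ((α g * αs g⁻¹) x) ((α g * αs g⁻¹) y) = B x y) ∧
    (∀ g : G, (α g * αs g⁻¹) * (α g⁻¹ * αs g⁻¹⁻¹) = 1) := by
  -- uniqueness of maps determined by B on the right
  have huniq : ∀ S T : Module.End k V, (∀ x y, B x (S y) = B x (T y)) → S = T := by
    intro S T h
    ext y
    have h0 : ∀ x : V, B (S y - T y) x = 0 := by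
      intro x
      have : B (S y - T y) x = B (S y) x - B (T y) x := by
        rw [map_sub]; rfl
      rw [this, Bsymm (S y) x, Bsymm (T y) x, h x y, sub_self]
    have := Bnondeg _ h0
    exact sub_eq_zero.mp this
  have hαs1 : αs 1 = 1 := by
    refine (huniq (αs 1) 1 ?_).symm.symm
    intro x y
    have := hadj 1 x y
    rw [hα1] at this
    simpa using this.symm
  have hαsmul : ∀ g h : G, αs (g * h) = αs h * αs g := by
    intro g h
    apply huniq
    intro x y
    have h1 : B x (αs (g * h) y) = B (α (g * h) x) y := (hadj _ _ _).symm
    rw [h1, hαmul]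
    show B (α g (α h x)) y = B x (αs h (αs g y))
    rw [hadj g (α h x) y, hadj h x (αs g y)]
  have hadj' : ∀ (g : G) (x y : V), B (αs g x) y = B x (α g y) := by
    intro g x y
    rw [Bsymm, ← hadj, Bsymm]
  have hαsinv : ∀ g : G, αs g * αs g⁻¹ = 1 := by
    intro g
    rw [← hαsmul, inv_mul_cancel, hαs1]
  have hαsinv' : ∀ g : G, αs g⁻¹ * αs g = 1 := by
    intro g
    rw [← hαsmul, mul_inv_cancel, hαs1]
  refine ⟨?_, ?_, ?_, ?_⟩
  · intro g h
    have : αs (g * h)⁻¹ = αs g⁻¹ * αs h⁻¹ := by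
      rw [mul_inv_rev, hαsmul]
    rw [hαmul, this]
    calc α g * α h * (αs g⁻¹ * αs h⁻¹)
        = α g * (α h * αs g⁻¹) * αs h⁻¹ := by simp only [mul_assoc, mul_one]
      _ = α g * (αs g⁻¹ * α h) * αs h⁻¹ := by rw [hcomm]
      _ = α g * αs g⁻¹ * (α h * αs h⁻¹) := by simp only [mul_assoc, mul_one]
  · rw [inv_one, hα1, hαs1, mul_one]
  · intro g x y
    show B (α g (αs g⁻¹ x)) (α g (αs g⁻¹ y)) = B x y
    rw [hadj g (αs g⁻¹ x), hadj' g⁻¹ x]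
    show B x ((α g⁻¹ * (αs g * (α g * αs g⁻¹))) y) = B x y
    have : α g⁻¹ * (αs g * (α g * αs g⁻¹)) = 1 := by
      calc α g⁻¹ * (αs g * (α g * αs g⁻¹))
          = (α g⁻¹ * αs g) * α g * αs g⁻¹ := by simp only [mul_assoc, mul_one]
        _ = (αs g * α g⁻¹) * α g * αs g⁻¹ := by rw [hcomm]
        _ = αs g * (α g⁻¹ * α g) * αs g⁻¹ := by simp only [mul_assoc, mul_one]
        _ = αs g * αs g⁻¹ := by rw [← hαmul, inv_mul_cancel, hα1, mul_one]
        _ = 1 := hαsinv g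
    rw [this]
    rfl
  · intro g
    rw [inv_inv]
    calc α g * αs g⁻¹ * (α g⁻¹ * αs g)
        = α g * (αs g⁻¹ * α g⁻¹) * αs g := by simp only [mul_assoc, mul_one]
      _ = α g * (α g⁻¹ * αs g⁻¹) * αs g := by rw [hcomm]
      _ = (α g * α g⁻¹) * (αs g⁻¹ * αs g) := by simp only [mul_assoc, mul_one]
      _ = 1 := by rw [← hαmul, mul_inv_cancel, hα1, hαsinv' g, mul_one]
end

section
/- Let (C₁,d₁), (C₂,d₂), (C₃,d₃) be chain complexes with special chain contractions (pₖ, iₖ, Hₖ) onto complexes (Cₖ', dₖ'), k = 1,2,3. Let φ : C₁ → C₂ and ψ : C₂ → C₃ be chain maps such that φ∘H₁ = H₂∘φ and ψ∘H₂ = H₃∘ψ. Then p₃∘(ψ∘φ)∘i₁ = (p₃∘ψ∘i₂) ∘ (p₂∘φ∘i₁). -/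
/-- A special chain contraction of `(C, d)` onto `(C', d')`. -/
structure SpecialContraction {k : Type*} [Field k]
    {C C' : Type*} [AddCommGroup C] [Module k C] [AddCommGroup C'] [Module k C']
    (d : C →ₗ[k] C) (d' : C' →ₗ[k] C') where
  p : C →ₗ[k] C'
  i : C' →ₗ[k] C
  H : C →ₗ[k] C
  p_chain : p ∘ₗ d = d' ∘ₗ p
  i_chain : i ∘ₗ d' = d ∘ₗ i
  pi : p ∘ₗ i = LinearMap.id
  homotopy : i ∘ₗ p - LinearMap.id = d ∘ₗ H + H ∘ₗ d
  Hi : H ∘ₗ i = 0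
  pH : p ∘ₗ H = 0
  HH : H ∘ₗ H = 0

/-- for chain maps `φ : C₁ → C₂`, `ψ : C₂ → C₃` commuting with the
homotopies of special contractions, the transfer of the composite is the composite
of the transfers: `p₃ ∘ (ψ ∘ φ) ∘ i₁ = (p₃ ∘ ψ ∘ i₂) ∘ (p₂ ∘ φ ∘ i₁)`. -/
theorem curved_gauge_stmt1 {k : Type*} [Field k]
    {C₁ C₂ C₃ C₁' C₂' C₃' : Type*}
    [AddCommGroup C₁] [Module k C₁] [AddCommGroup C₂] [Module k C₂]
    [AddCommGroup C₃] [Module k C₃]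
    [AddCommGroup C₁'] [Module k C₁'] [AddCommGroup C₂'] [Module k C₂']
    [AddCommGroup C₃'] [Module k C₃']
    (d₁ : C₁ →ₗ[k] C₁) (d₂ : C₂ →ₗ[k] C₂) (d₃ : C₃ →ₗ[k] C₃)
    (d₁' : C₁' →ₗ[k] C₁') (d₂' : C₂' →ₗ[k] C₂') (d₃' : C₃' →ₗ[k] C₃')
    (hd₁ : d₁ ∘ₗ d₁ = 0) (hd₂ : d₂ ∘ₗ d₂ = 0) (hd₃ : d₃ ∘ₗ d₃ = 0)
    (S₁ : SpecialContraction d₁ d₁') (S₂ : SpecialContraction d₂ d₂')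
    (S₃ : SpecialContraction d₃ d₃')
    (φ : C₁ →ₗ[k] C₂) (ψ : C₂ →ₗ[k] C₃)
    (hφ : φ ∘ₗ d₁ = d₂ ∘ₗ φ) (hψ : ψ ∘ₗ d₂ = d₃ ∘ₗ ψ)
    (hφH : φ ∘ₗ S₁.H = S₂.H ∘ₗ φ) (hψH : ψ ∘ₗ S₂.H = S₃.H ∘ₗ ψ) :
    S₃.p ∘ₗ (ψ ∘ₗ φ) ∘ₗ S₁.i = (S₃.p ∘ₗ ψ ∘ₗ S₂.i) ∘ₗ (S₂.p ∘ₗ φ ∘ₗ S₁.i) := by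
  have h2 : S₂.i ∘ₗ S₂.p = d₂ ∘ₗ S₂.H + S₂.H ∘ₗ d₂ + LinearMap.id :=
    sub_eq_iff_eq_add.mp S₂.homotopy
  have key : S₃.p ∘ₗ (ψ ∘ₗ ((S₂.i ∘ₗ S₂.p) ∘ₗ φ)) ∘ₗ S₁.i
      = S₃.p ∘ₗ (ψ ∘ₗ φ) ∘ₗ S₁.i := by
    rw [h2]
    simp only [LinearMap.add_comp, LinearMap.comp_add, LinearMap.id_comp,
      LinearMap.comp_assoc]
    have t1 : S₃.p ∘ₗ ψ ∘ₗ d₂ ∘ₗ S₂.H ∘ₗ φ ∘ₗ S₁.i = 0 := by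
      rw [← LinearMap.comp_assoc (S₂.H ∘ₗ φ ∘ₗ S₁.i) d₂ ψ, hψ, LinearMap.comp_assoc,
        ← LinearMap.comp_assoc (φ ∘ₗ S₁.i) S₂.H ψ, hψH, LinearMap.comp_assoc,
        ← LinearMap.comp_assoc (S₃.H ∘ₗ ψ ∘ₗ φ ∘ₗ S₁.i) d₃ S₃.p, S₃.p_chain,
        LinearMap.comp_assoc, ← LinearMap.comp_assoc (ψ ∘ₗ φ ∘ₗ S₁.i) S₃.H S₃.p, S₃.pH]
      simp
    have t2 : S₃.p ∘ₗ ψ ∘ₗ S₂.H ∘ₗ d₂ ∘ₗ φ ∘ₗ S₁.i = 0 := by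
      rw [← LinearMap.comp_assoc S₁.i φ d₂, ← hφ, LinearMap.comp_assoc, ← S₁.i_chain,
        ← LinearMap.comp_assoc (φ ∘ₗ S₁.i ∘ₗ d₁') S₂.H ψ, hψH, LinearMap.comp_assoc,
        ← LinearMap.comp_assoc (ψ ∘ₗ φ ∘ₗ S₁.i ∘ₗ d₁') S₃.H S₃.p, S₃.pH]
      simp
    rw [t1, t2]
    simp
  calc S₃.p ∘ₗ (ψ ∘ₗ φ) ∘ₗ S₁.i
      = S₃.p ∘ₗ (ψ ∘ₗ ((S₂.i ∘ₗ S₂.p) ∘ₗ φ)) ∘ₗ S₁.i := key.symm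
    _ = (S₃.p ∘ₗ ψ ∘ₗ S₂.i) ∘ₗ (S₂.p ∘ₗ φ ∘ₗ S₁.i) := by
        simp only [LinearMap.comp_assoc]
end

section
/- Let (pₖ, iₖ, Hₖ), k = 1,2, be special chain contractions of chain complexes (Cₖ,dₖ) onto (Cₖ',dₖ'), and let ⟨·,·⟩ₖ be inner products on Cₖ. Let φ : C₁ → C₂ and ψ : C₂ → C₁ be chain maps with φ∘H₁ = H₂∘φ, ψ∘H₂ = H₁∘ψ, and such that ψ is adjoint to φ (i.e. ⟨φx, y⟩₂ = ⟨x, ψy⟩₁ for all x ∈ C₁, y ∈ C₂). Then ψ̂ := p₁∘ψ∘i₂ is adjoint to φ̂ := p₂∘φ∘i₁ with respect to the induced inner products ⟨iₖ·, iₖ·⟩ₖ on Cₖ'; that is, ⟨i₂ φ̂ c₁, i₂ c₂⟩₂ = ⟨i₁ c₁, i₁ ψ̂ c₂⟩₁ for all c₁ ∈ C₁', c₂ ∈ C₂'. -/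
/-- if `ψ` is adjoint to `φ` and both commute with the homotopies of
special contractions, then the transferred map `ψ̂ = p₁ ∘ ψ ∘ i₂` is adjoint to
`φ̂ = p₂ ∘ φ ∘ i₁` with respect to the induced inner products `⟨i·, i·⟩`. -/
theorem curved_gauge_stmt2 {k : Type*} [Field k]
    {C₁ C₂ C₁' C₂' : Type*}
    [AddCommGroup C₁] [Module k C₁] [AddCommGroup C₂] [Module k C₂]
    [AddCommGroup C₁'] [Module k C₁'] [AddCommGroup C₂'] [Module k C₂']
    (d₁ : C₁ →ₗ[k] C₁) (d₂ : C₂ →ₗ[k] C₂)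
    (d₁' : C₁' →ₗ[k] C₁') (d₂' : C₂' →ₗ[k] C₂')
    (hd₁ : d₁ ∘ₗ d₁ = 0) (hd₂ : d₂ ∘ₗ d₂ = 0)
    (S₁ : SpecialContraction d₁ d₁') (S₂ : SpecialContraction d₂ d₂')
    (B₁ : C₁ →ₗ[k] C₁ →ₗ[k] k) (B₂ : C₂ →ₗ[k] C₂ →ₗ[k] k)
    (hB₁symm : ∀ x y, B₁ x y = B₁ y x) (hB₂symm : ∀ x y, B₂ x y = B₂ y x)
    (hB₁nondeg : ∀ x, (∀ y, B₁ x y = 0) → x = 0)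
    (hB₂nondeg : ∀ x, (∀ y, B₂ x y = 0) → x = 0)
    (φ : C₁ →ₗ[k] C₂) (ψ : C₂ →ₗ[k] C₁)
    (hφ : φ ∘ₗ d₁ = d₂ ∘ₗ φ) (hψ : ψ ∘ₗ d₂ = d₁ ∘ₗ ψ)
    (hφH : φ ∘ₗ S₁.H = S₂.H ∘ₗ φ) (hψH : ψ ∘ₗ S₂.H = S₁.H ∘ₗ ψ)
    (hadj : ∀ (x : C₁) (y : C₂), B₂ (φ x) y = B₁ x (ψ y)) :
    ∀ (c₁ : C₁') (c₂ : C₂'),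
      B₂ (S₂.i ((S₂.p ∘ₗ φ ∘ₗ S₁.i) c₁)) (S₂.i c₂)
        = B₁ (S₁.i c₁) (S₁.i ((S₁.p ∘ₗ ψ ∘ₗ S₂.i) c₂)) := by
  intro c₁ c₂
  -- H₂ (φ (i₁ c₁)) = 0
  have h1 : S₂.H (φ (S₁.i c₁)) = 0 := by
    have := DFunLike.congr_fun hφH.symm (S₁.i c₁)
    simp only [LinearMap.comp_apply] at this
    rw [this]
    have hz := DFunLike.congr_fun S₁.Hi c₁
    simp only [LinearMap.comp_apply, LinearMap.zero_apply] at hz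
    rw [hz, map_zero]
  -- H₂ (d₂ (φ (i₁ c₁))) = 0
  have h2 : S₂.H (d₂ (φ (S₁.i c₁))) = 0 := by
    have hd : d₂ (φ (S₁.i c₁)) = φ (S₁.i (d₁' c₁)) := by
      have e1 := DFunLike.congr_fun hφ.symm (S₁.i c₁)
      have e2 := DFunLike.congr_fun S₁.i_chain c₁
      simp only [LinearMap.comp_apply] at e1 e2
      rw [e1, e2]
    rw [hd]
    have := DFunLike.congr_fun hφH.symm (S₁.i (d₁' c₁))
    simp only [LinearMap.comp_apply] at this
    rw [this]
    have hz := DFunLike.congr_fun S₁.Hi (d₁' c₁)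
    simp only [LinearMap.comp_apply, LinearMap.zero_apply] at hz
    rw [hz, map_zero]
  have key₂ : S₂.i (S₂.p (φ (S₁.i c₁))) = φ (S₁.i c₁) := by
    have := DFunLike.congr_fun S₂.homotopy (φ (S₁.i c₁))
    simp only [LinearMap.sub_apply, LinearMap.add_apply, LinearMap.comp_apply,
      LinearMap.id_apply, h1, h2, map_zero, add_zero] at this
    rwa [sub_eq_zero] at this
  -- symmetric facts for ψ
  have g1 : S₁.H (ψ (S₂.i c₂)) = 0 := by
    have := DFunLike.congr_fun hψH.symm (S₂.i c₂)
    simp only [LinearMap.comp_apply] at this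
    rw [this]
    have hz := DFunLike.congr_fun S₂.Hi c₂
    simp only [LinearMap.comp_apply, LinearMap.zero_apply] at hz
    rw [hz, map_zero]
  have g2 : S₁.H (d₁ (ψ (S₂.i c₂))) = 0 := by
    have hd : d₁ (ψ (S₂.i c₂)) = ψ (S₂.i (d₂' c₂)) := by
      have e1 := DFunLike.congr_fun hψ.symm (S₂.i c₂)
      have e2 := DFunLike.congr_fun S₂.i_chain c₂
      simp only [LinearMap.comp_apply] at e1 e2
      rw [e1, e2]
    rw [hd]
    have := DFunLike.congr_fun hψH.symm (S₂.i (d₂' c₂))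
    simp only [LinearMap.comp_apply] at this
    rw [this]
    have hz := DFunLike.congr_fun S₂.Hi (d₂' c₂)
    simp only [LinearMap.comp_apply, LinearMap.zero_apply] at hz
    rw [hz, map_zero]
  have key₁ : S₁.i (S₁.p (ψ (S₂.i c₂))) = ψ (S₂.i c₂) := by
    have := DFunLike.congr_fun S₁.homotopy (ψ (S₂.i c₂))
    simp only [LinearMap.sub_apply, LinearMap.add_apply, LinearMap.comp_apply,
      LinearMap.id_apply, g1, g2, map_zero, add_zero] at this
    rwa [sub_eq_zero] at this
  simp only [LinearMap.comp_apply, key₁, key₂]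
  exact hadj (S₁.i c₁) (S₂.i c₂)
end

section
/- Let (pₖ, iₖ, Hₖ), k = 1,2, be special chain contractions of chain complexes (Cₖ,dₖ) onto (Cₖ',dₖ'), with inner products ⟨·,·⟩ₖ on Cₖ. If φ : C₁ → C₂ is a chain map which is unitary (an invertible map preserving the inner products and admitting an adjoint) and satisfies φ∘H₁ = H₂∘φ and φ⁻¹∘H₂ = H₁∘φ⁻¹, then the transferred map φ̂ := p₂∘φ∘i₁ is unitary with respect to the induced inner products ⟨iₖ·, iₖ·⟩ₖ on Cₖ'. -/
/-- if `φ` is a unitary chain map (invertible, preserving the inner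
products) commuting with the homotopies (and so does its inverse), then the
transferred map `φ̂ = p₂ ∘ φ ∘ i₁` is unitary with respect to the induced inner
products `⟨i·, i·⟩`: it preserves them and is invertible. -/
theorem curved_gauge_stmt3 {k : Type*} [Field k]
    {C₁ C₂ C₁' C₂' : Type*}
    [AddCommGroup C₁] [Module k C₁] [AddCommGroup C₂] [Module k C₂]
    [AddCommGroup C₁'] [Module k C₁'] [AddCommGroup C₂'] [Module k C₂']
    (d₁ : C₁ →ₗ[k] C₁) (d₂ : C₂ →ₗ[k] C₂)
    (d₁' : C₁' →ₗ[k] C₁') (d₂' : C₂' →ₗ[k] C₂')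
    (hd₁ : d₁ ∘ₗ d₁ = 0) (hd₂ : d₂ ∘ₗ d₂ = 0)
    (S₁ : SpecialContraction d₁ d₁') (S₂ : SpecialContraction d₂ d₂')
    (B₁ : C₁ →ₗ[k] C₁ →ₗ[k] k) (B₂ : C₂ →ₗ[k] C₂ →ₗ[k] k)
    (hB₁symm : ∀ x y, B₁ x y = B₁ y x) (hB₂symm : ∀ x y, B₂ x y = B₂ y x)
    (hB₁nondeg : ∀ x, (∀ y, B₁ x y = 0) → x = 0)
    (hB₂nondeg : ∀ x, (∀ y, B₂ x y = 0) → x = 0)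
    (φ : C₁ →ₗ[k] C₂) (φinv : C₂ →ₗ[k] C₁)
    (hinv₁ : φinv ∘ₗ φ = LinearMap.id) (hinv₂ : φ ∘ₗ φinv = LinearMap.id)
    (hφ : φ ∘ₗ d₁ = d₂ ∘ₗ φ)
    (hφuni : ∀ x y : C₁, B₂ (φ x) (φ y) = B₁ x y)
    (hφH : φ ∘ₗ S₁.H = S₂.H ∘ₗ φ) (hφinvH : φinv ∘ₗ S₂.H = S₁.H ∘ₗ φinv) :
    (∀ c c' : C₁',
        B₂ (S₂.i ((S₂.p ∘ₗ φ ∘ₗ S₁.i) c)) (S₂.i ((S₂.p ∘ₗ φ ∘ₗ S₁.i) c'))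
          = B₁ (S₁.i c) (S₁.i c')) ∧
    (∃ χ : C₂' →ₗ[k] C₁',
        χ ∘ₗ (S₂.p ∘ₗ φ ∘ₗ S₁.i) = LinearMap.id ∧
        (S₂.p ∘ₗ φ ∘ₗ S₁.i) ∘ₗ χ = LinearMap.id) := by

  -- pointwise versions
  have hφH' : ∀ x, φ (S₁.H x) = S₂.H (φ x) := fun x =>
    congrArg (fun f => f x) hφH
  have hφinvH' : ∀ x, φinv (S₂.H x) = S₁.H (φinv x) := fun x =>
    congrArg (fun f => f x) hφinvH
  have hφ' : ∀ x, φ (d₁ x) = d₂ (φ x) := fun x => congrArg (fun f => f x) hφ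
  have hφinv' : ∀ x, φinv (d₂ x) = d₁ (φinv x) := by
    intro x
    have h1 : φ (φinv x) = x := congrArg (fun f => f x) hinv₂
    have h2 : ∀ y, φinv (φ y) = y := fun y => congrArg (fun f => f y) hinv₁
    calc φinv (d₂ x) = φinv (d₂ (φ (φinv x))) := by rw [h1]
      _ = φinv (φ (d₁ (φinv x))) := by rw [hφ']
      _ = d₁ (φinv x) := h2 _
  have hHi₁ : ∀ c, S₁.H (S₁.i c) = 0 := fun c => congrArg (fun f => f c) S₁.Hi
  have hHi₂ : ∀ c, S₂.H (S₂.i c) = 0 := fun c => congrArg (fun f => f c) S₂.Hi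
  have hic₁ : ∀ c, S₁.i (d₁' c) = d₁ (S₁.i c) := fun c => congrArg (fun f => f c) S₁.i_chain
  have hic₂ : ∀ c, S₂.i (d₂' c) = d₂ (S₂.i c) := fun c => congrArg (fun f => f c) S₂.i_chain
  have hhom₂ : ∀ x, S₂.i (S₂.p x) - x = d₂ (S₂.H x) + S₂.H (d₂ x) := fun x =>
    congrArg (fun f => f x) S₂.homotopy
  have hhom₁ : ∀ x, S₁.i (S₁.p x) - x = d₁ (S₁.H x) + S₁.H (d₁ x) := fun x =>
    congrArg (fun f => f x) S₁.homotopy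
  -- key identity: i₂ ∘ p₂ ∘ φ ∘ i₁ = φ ∘ i₁
  have key : ∀ c : C₁', S₂.i (S₂.p (φ (S₁.i c))) = φ (S₁.i c) := by
    intro c
    have e1 : S₂.H (φ (S₁.i c)) = 0 := by rw [← hφH', hHi₁, map_zero]
    have e2 : S₂.H (d₂ (φ (S₁.i c))) = 0 := by
      rw [← hφ', ← hic₁, ← hφH', hHi₁, map_zero]
    have := hhom₂ (φ (S₁.i c))
    rw [e1, e2, map_zero, add_zero] at this
    exact sub_eq_zero.mp this
  have key' : ∀ c : C₂', S₁.i (S₁.p (φinv (S₂.i c))) = φinv (S₂.i c) := by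
    intro c
    have e1 : S₁.H (φinv (S₂.i c)) = 0 := by rw [← hφinvH', hHi₂, map_zero]
    have e2 : S₁.H (d₁ (φinv (S₂.i c))) = 0 := by
      rw [← hφinv', ← hic₂, ← hφinvH', hHi₂, map_zero]
    have := hhom₁ (φinv (S₂.i c))
    rw [e1, e2, map_zero, add_zero] at this
    exact sub_eq_zero.mp this
  have hpi₁ : ∀ c, S₁.p (S₁.i c) = c := fun c => congrArg (fun f => f c) S₁.pi
  have hpi₂ : ∀ c, S₂.p (S₂.i c) = c := fun c => congrArg (fun f => f c) S₂.pi
  have hinv₁' : ∀ x, φinv (φ x) = x := fun x => congrArg (fun f => f x) hinv₁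
  have hinv₂' : ∀ x, φ (φinv x) = x := fun x => congrArg (fun f => f x) hinv₂
  constructor
  · intro c c'
    simp only [LinearMap.comp_apply, key]
    exact hφuni _ _
  · refine ⟨S₁.p ∘ₗ φinv ∘ₗ S₂.i, ?_, ?_⟩
    · ext c
      simp only [LinearMap.comp_apply, LinearMap.id_apply, key, hinv₁', hpi₁]
    · ext c
      simp only [LinearMap.comp_apply, LinearMap.id_apply, key', hinv₂', hpi₂]
end

section
/- Let (C,d) be a chain complex with a special chain contraction (p,i,H) onto (C',d'), let δ be a perturbation of d (i.e. (d+δ)² = 0) such that 1 - δH is invertible, and set Σ = (1 - δH)⁻¹∘δ. Then δ' := p∘Σ∘i is a perturbation of d', i.e. (d' + δ')² = 0. -/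
lemma pert_aux {R : Type*} [Ring R] (a x h u : R)
    (h1 : a * a = 0) (h2 : (a + x) * (a + x) = 0)
    (h3 : (1 - x * h) * u = 1) (h4 : u * (1 - x * h) = 1) :
    a * (u * x) + (u * x) * a + (u * x) * (u * x)
      + (u * x) * (a * (h * (u * x))) + (u * x) * (h * (a * (u * x))) = 0 := by
  have e1 : u * (x * h) = u - 1 := by
    have h' : u * (x * h) = u - u * (1 - x * h) := by noncomm_ring
    rw [h', h4]
  have e2 : (x * h) * u = u - 1 := by
    have h' : (x * h) * u = u - (1 - x * h) * u := by noncomm_ring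
    rw [h', h3]
  have e3 : x * x + x * a + a * x = 0 := by
    have h' : x * x + x * a + a * x = (a + x) * (a + x) - a * a := by noncomm_ring
    rw [h', h1, h2, sub_zero]
  calc a * (u * x) + (u * x) * a + (u * x) * (u * x)
        + (u * x) * (a * (h * (u * x))) + (u * x) * (h * (a * (u * x)))
      = (a * (u * x) + (u * x) * a + (u * x) * (u * x)
        + (u * x) * (a * (h * (u * x)))) + (u * (x * h)) * (a * (u * x)) := by noncomm_ring
    _ = (a * (u * x) + (u * x) * a + (u * x) * (u * x)
        + (u * x) * (a * (h * (u * x)))) + (u - 1) * (a * (u * x)) := by rw [e1]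
    _ = u * (x * ((u - 1) * x)) + u * (a * ((u - 1) * x))
        + (u * x) * (a * (h * (u * x))) + u * (x * x) + u * (x * a) + u * (a * x) := by
          noncomm_ring
    _ = u * (x * (((x * h) * u) * x)) + u * (a * (((x * h) * u) * x))
        + (u * x) * (a * (h * (u * x))) + u * (x * x) + u * (x * a) + u * (a * x) := by
          rw [e2]
    _ = u * ((x * x + x * a + a * x) * (1 + h * (u * x))) := by noncomm_ring
    _ = 0 := by rw [e3, zero_mul, mul_zero]

/-- (perturbation of the transferred differential) given a special
contraction `(p,i,H)` of `(C,d)` onto `(C',d')`, a perturbation `δ` of `d`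
(`(d+δ)² = 0`) with `1 - δ∘H` invertible (with two-sided inverse `U`), and
`Σ = (1 - δ∘H)⁻¹ ∘ δ`, the map `δ' = p ∘ Σ ∘ i` is a perturbation of `d'`. -/
theorem curved_gauge_stmt4 {k : Type*} [Field k]
    {C C' : Type*} [AddCommGroup C] [Module k C] [AddCommGroup C'] [Module k C']
    (d : C →ₗ[k] C) (d' : C' →ₗ[k] C')
    (hd : d ∘ₗ d = 0) (hd' : d' ∘ₗ d' = 0)
    (S : SpecialContraction d d')
    (δ : C →ₗ[k] C)
    (hpert : (d + δ) ∘ₗ (d + δ) = 0)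
    (U : C →ₗ[k] C)
    (hU₁ : (LinearMap.id - δ ∘ₗ S.H) ∘ₗ U = LinearMap.id)
    (hU₂ : U ∘ₗ (LinearMap.id - δ ∘ₗ S.H) = LinearMap.id) :
    (d' + S.p ∘ₗ (U ∘ₗ δ) ∘ₗ S.i) ∘ₗ (d' + S.p ∘ₗ (U ∘ₗ δ) ∘ₗ S.i) = 0 := by
  have h1 : d * d = 0 := hd
  have h2 : (d + δ) * (d + δ) = 0 := hpert
  have h3 : (1 - δ * S.H) * U = 1 := hU₁
  have h4 : U * (1 - δ * S.H) = 1 := hU₂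
  have key := pert_aux d δ S.H U h1 h2 h3 h4
  simp only [Module.End.mul_eq_comp] at key
  have hp : ∀ z, d' (S.p z) = S.p (d z) := fun z => (DFunLike.congr_fun S.p_chain z).symm
  have hi : ∀ z, S.i (d' z) = d (S.i z) := fun z => DFunLike.congr_fun S.i_chain z
  have hd'a : ∀ z, d' (d' z) = 0 := fun z => DFunLike.congr_fun hd' z
  have hip : ∀ z, S.i (S.p z) = z + (d (S.H z) + S.H (d z)) := by
    intro z
    have := DFunLike.congr_fun S.homotopy z
    simp only [LinearMap.sub_apply, LinearMap.comp_apply, LinearMap.add_apply,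
      LinearMap.id_apply] at this
    linear_combination (norm := abel) this
  have main : (d' + S.p ∘ₗ (U ∘ₗ δ) ∘ₗ S.i) ∘ₗ (d' + S.p ∘ₗ (U ∘ₗ δ) ∘ₗ S.i)
      = S.p ∘ₗ (d ∘ₗ (U ∘ₗ δ) + (U ∘ₗ δ) ∘ₗ d + (U ∘ₗ δ) ∘ₗ (U ∘ₗ δ)
        + (U ∘ₗ δ) ∘ₗ (d ∘ₗ (S.H ∘ₗ (U ∘ₗ δ))) + (U ∘ₗ δ) ∘ₗ (S.H ∘ₗ (d ∘ₗ (U ∘ₗ δ)))) ∘ₗ S.i := by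
    ext y
    simp only [LinearMap.add_apply, LinearMap.comp_apply, hd'a, hp, hi, hip, map_add]
    abel
  rw [main, key]
  simp
end

section
/- Let (C,d) be a chain complex with a special chain contraction (p,i,H) onto (C',d'), δ a perturbation of d with 1 - δH invertible, Σ = (1 - δH)⁻¹δ, and δ' = pΣi. Then the perturbed maps ĩ = i + HΣi, p̃ = p + pΣH, H̃ = H + HΣH form a special chain contraction of (C, d+δ) onto (C', d'+δ'): p̃ and ĩ are chain maps for the perturbed differentials, p̃∘ĩ = 1, ĩ∘p̃ - 1 = (d+δ)H̃ + H̃(d+δ), H̃∘ĩ = 0, p̃∘H̃ = 0, and H̃² = 0. -/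
/-- the homological perturbation lemma. With `Σ = (1-δ∘H)⁻¹ ∘ δ`
(inverse given by `U`), `δ' = p∘Σ∘i`, `iP = i + H∘Σ∘i`, `pP = p + p∘Σ∘H`,
`HP = H + H∘Σ∘H`, the data `(pP, iP, HP)` is a special chain contraction of
`(C, d+δ)` onto `(C', d'+δ')`. -/
theorem curved_gauge_stmt5 {k : Type*} [Field k]
    {C C' : Type*} [AddCommGroup C] [Module k C] [AddCommGroup C'] [Module k C']
    (d : C →ₗ[k] C) (d' : C' →ₗ[k] C')
    (hd : d ∘ₗ d = 0) (hd' : d' ∘ₗ d' = 0)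
    (S : SpecialContraction d d')
    (δ : C →ₗ[k] C)
    (hpert : (d + δ) ∘ₗ (d + δ) = 0)
    (U : C →ₗ[k] C)
    (hU₁ : (LinearMap.id - δ ∘ₗ S.H) ∘ₗ U = LinearMap.id)
    (hU₂ : U ∘ₗ (LinearMap.id - δ ∘ₗ S.H) = LinearMap.id)
    (Sg : C →ₗ[k] C) (δ' : C' →ₗ[k] C') (hSg : Sg = U ∘ₗ δ) (hδ' : δ' = S.p ∘ₗ Sg ∘ₗ S.i)
    (iP : C' →ₗ[k] C) (pP : C →ₗ[k] C') (HP : C →ₗ[k] C)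
    (hiP : iP = S.i + S.H ∘ₗ Sg ∘ₗ S.i)
    (hpP : pP = S.p + S.p ∘ₗ Sg ∘ₗ S.H)
    (hHP : HP = S.H + S.H ∘ₗ Sg ∘ₗ S.H) :
    (pP ∘ₗ (d + δ) = (d' + δ') ∘ₗ pP) ∧
    (iP ∘ₗ (d' + δ') = (d + δ) ∘ₗ iP) ∧
    (pP ∘ₗ iP = LinearMap.id) ∧
    (iP ∘ₗ pP - LinearMap.id = (d + δ) ∘ₗ HP + HP ∘ₗ (d + δ)) ∧
    (HP ∘ₗ iP = 0) ∧ (pP ∘ₗ HP = 0) ∧ (HP ∘ₗ HP = 0) := by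
  -- ring-language versions of the hypotheses (all defeq)
  have hdd : d * d = 0 := hd
  have hU1 : ((1 : Module.End k C) - δ * S.H) * U = 1 := hU₁
  have hU2 : U * ((1 : Module.End k C) - δ * S.H) = 1 := hU₂
  have hSgm : Sg = U * δ := hSg
  have hR : d * δ + δ * d + δ * δ = 0 := by
    have hp : (d + δ) * (d + δ) = 0 := hpert
    calc d * δ + δ * d + δ * δ = (d + δ) * (d + δ) - d * d := by noncomm_ring
      _ = 0 := by rw [hp, hdd, sub_zero]
  have hU1e : U = 1 + δ * (S.H * U) := by
    calc U = ((1 : Module.End k C) - δ * S.H) * U + δ * (S.H * U) := by noncomm_ring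
      _ = 1 + δ * (S.H * U) := by rw [hU1]
  have hU2e : U = 1 + (U * δ) * S.H := by
    calc U = U * ((1 : Module.End k C) - δ * S.H) + (U * δ) * S.H := by noncomm_ring
      _ = 1 + (U * δ) * S.H := by rw [hU2]
  have F2 : Sg = δ + δ * (S.H * Sg) := by
    conv_lhs => rw [hSgm, hU1e]
    rw [hSgm]
    noncomm_ring
  have F3 : Sg = δ + Sg * (S.H * δ) := by
    conv_lhs => rw [hSgm, hU2e]
    rw [hSgm]
    noncomm_ring
  have e1 : ((1 : Module.End k C) + Sg * S.H) * δ = Sg := by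
    conv_rhs => rw [F3]
    noncomm_ring
  have e2 : δ * ((1 : Module.End k C) + S.H * Sg) = Sg := by
    conv_rhs => rw [F2]
    noncomm_ring
  -- master identity
  have hX : d * Sg + Sg * d + Sg * Sg + Sg * (d * S.H * Sg) + Sg * (S.H * d * Sg) = 0 := by
    calc d * Sg + Sg * d + Sg * Sg + Sg * (d * S.H * Sg) + Sg * (S.H * d * Sg)
        = ((1 : Module.End k C) + Sg * S.H) * (d * Sg) + Sg * (d * ((1 : Module.End k C) + S.H * Sg)) + Sg * Sg := by
          noncomm_ring
      _ = ((1 : Module.End k C) + Sg * S.H) * (d * (δ * ((1 : Module.End k C) + S.H * Sg)))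
            + (((1 : Module.End k C) + Sg * S.H) * δ) * (d * ((1 : Module.End k C) + S.H * Sg))
            + (((1 : Module.End k C) + Sg * S.H) * δ) * (δ * ((1 : Module.End k C) + S.H * Sg)) := by
          rw [e1, e2]
      _ = ((1 : Module.End k C) + Sg * S.H) * ((d * δ + δ * d + δ * δ) * ((1 : Module.End k C) + S.H * Sg)) := by
          noncomm_ring
      _ = 0 := by rw [hR, zero_mul, mul_zero]
  have hUd : ((1 : Module.End k C) + Sg * S.H) * (d + δ) = d + Sg + Sg * (S.H * d) := by
    calc ((1 : Module.End k C) + Sg * S.H) * (d + δ)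
        = (d + Sg * (S.H * d)) + ((1 : Module.End k C) + Sg * S.H) * δ := by noncomm_ring
      _ = (d + Sg * (S.H * d)) + Sg := by rw [e1]
      _ = d + Sg + Sg * (S.H * d) := by abel
  have hdV : (d + δ) * ((1 : Module.End k C) + S.H * Sg) = d + Sg + d * (S.H * Sg) := by
    calc (d + δ) * ((1 : Module.End k C) + S.H * Sg)
        = (d + d * (S.H * Sg)) + δ * ((1 : Module.End k C) + S.H * Sg) := by noncomm_ring
      _ = (d + d * (S.H * Sg)) + Sg := by rw [e2]
      _ = d + Sg + d * (S.H * Sg) := by abel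
  have stepD : (d + Sg + Sg * (d * S.H) + Sg * (S.H * d)) * ((1 : Module.End k C) + Sg * S.H)
      = ((1 : Module.End k C) + Sg * S.H) * (d + δ) := by
    calc (d + Sg + Sg * (d * S.H) + Sg * (S.H * d)) * ((1 : Module.End k C) + Sg * S.H)
        = (d + Sg + Sg * (S.H * d))
            + (d * Sg + Sg * d + Sg * Sg + Sg * (d * S.H * Sg) + Sg * (S.H * d * Sg)) * S.H := by
          noncomm_ring
      _ = d + Sg + Sg * (S.H * d) := by rw [hX, zero_mul, add_zero]
      _ = ((1 : Module.End k C) + Sg * S.H) * (d + δ) := hUd.symm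
  have stepB : ((1 : Module.End k C) + S.H * Sg) * (d + Sg + d * (S.H * Sg) + S.H * (d * Sg))
      = (d + δ) * ((1 : Module.End k C) + S.H * Sg) := by
    calc ((1 : Module.End k C) + S.H * Sg) * (d + Sg + d * (S.H * Sg) + S.H * (d * Sg))
        = (d + Sg + d * (S.H * Sg))
            + S.H * (d * Sg + Sg * d + Sg * Sg + Sg * (d * S.H * Sg) + Sg * (S.H * d * Sg)) := by
          noncomm_ring
      _ = d + Sg + d * (S.H * Sg) := by rw [hX, mul_zero, add_zero]
      _ = (d + δ) * ((1 : Module.End k C) + S.H * Sg) := hdV.symm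
  -- composition-language version of the homotopy relation
  have hip : S.i ∘ₗ S.p = (1 : Module.End k C) + (d * S.H + S.H * d) := by
    have h := S.homotopy
    rw [sub_eq_iff_eq_add] at h
    rw [h]
    simp only [Module.End.mul_eq_comp, Module.End.one_eq_id]
    abel
  -- pointwise facts
  have hpi' : ∀ x, S.p (S.i x) = x := fun x => by
    simpa using LinearMap.congr_fun S.pi x
  have hpH' : ∀ x, S.p (S.H x) = 0 := fun x => by
    simpa using LinearMap.congr_fun S.pH x
  have hHi' : ∀ x, S.H (S.i x) = 0 := fun x => by
    simpa using LinearMap.congr_fun S.Hi x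
  have hHH' : ∀ x, S.H (S.H x) = 0 := fun x => by
    simpa using LinearMap.congr_fun S.HH x
  have hipx : ∀ x, S.i (S.p x) = x + (d (S.H x) + S.H (d x)) := fun x => by
    simpa [Module.End.mul_apply] using LinearMap.congr_fun hip x
  have hd'p : ∀ x, d' (S.p x) = S.p (d x) := fun x => by
    simpa using (LinearMap.congr_fun S.p_chain x).symm
  have hid' : ∀ y, S.i (d' y) = d (S.i y) := fun y => by
    simpa using LinearMap.congr_fun S.i_chain y
  -- mixed bridges
  have hpP' : pP = S.p ∘ₗ ((1 : Module.End k C) + Sg * S.H) := by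
    rw [hpP]; ext x
    simp [Module.End.mul_apply]
  have hiP' : iP = ((1 : Module.End k C) + S.H * Sg) ∘ₗ S.i := by
    rw [hiP]; ext x
    simp [Module.End.mul_apply]
  have hHPm : HP = S.H + S.H * (Sg * S.H) := hHP
  have stepC : (d' + δ') ∘ₗ S.p = S.p ∘ₗ (d + Sg + Sg * (d * S.H) + Sg * (S.H * d)) := by
    ext x
    simp [hδ', hd'p, hipx, Module.End.mul_apply, map_add]
    abel
  have stepA : S.i ∘ₗ (d' + δ') = (d + Sg + d * (S.H * Sg) + S.H * (d * Sg)) ∘ₗ S.i := by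
    ext y
    simp [hδ', hid', hipx, Module.End.mul_apply, map_add]
    abel
  refine ⟨?_, ?_, ?_, ?_, ?_, ?_, ?_⟩
  · -- pP chain map
    calc pP ∘ₗ (d + δ)
        = S.p ∘ₗ (((1 : Module.End k C) + Sg * S.H) * (d + δ)) := by
          rw [hpP', LinearMap.comp_assoc]; rfl
      _ = S.p ∘ₗ ((d + Sg + Sg * (d * S.H) + Sg * (S.H * d)) * ((1 : Module.End k C) + Sg * S.H)) := by
          rw [stepD]
      _ = ((d' + δ') ∘ₗ S.p) ∘ₗ ((1 : Module.End k C) + Sg * S.H) := by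
          rw [stepC, Module.End.mul_eq_comp, LinearMap.comp_assoc]
      _ = (d' + δ') ∘ₗ pP := by rw [hpP', LinearMap.comp_assoc]
  · -- iP chain map
    calc iP ∘ₗ (d' + δ')
        = ((1 : Module.End k C) + S.H * Sg) ∘ₗ (S.i ∘ₗ (d' + δ')) := by
          rw [hiP', LinearMap.comp_assoc]
      _ = (((1 : Module.End k C) + S.H * Sg) * (d + Sg + d * (S.H * Sg) + S.H * (d * Sg))) ∘ₗ S.i := by
          rw [stepA, ← LinearMap.comp_assoc]; rfl
      _ = ((d + δ) ∘ₗ ((1 : Module.End k C) + S.H * Sg)) ∘ₗ S.i := by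
          rw [stepB]; rfl
      _ = (d + δ) ∘ₗ iP := by rw [hiP', LinearMap.comp_assoc]
  · -- pP ∘ iP = 1
    rw [hiP, hpP]; ext x
    simp [hpi', hpH', hHi', hHH', map_add]
  · -- homotopy
    have hG4 : ((1 : Module.End k C) + S.H * Sg) * (((1 : Module.End k C) + (d * S.H + S.H * d)) * ((1 : Module.End k C) + Sg * S.H)) - 1
        = (d + δ) * (S.H + S.H * (Sg * S.H)) + (S.H + S.H * (Sg * S.H)) * (d + δ) := by
      calc ((1 : Module.End k C) + S.H * Sg) * (((1 : Module.End k C) + (d * S.H + S.H * d)) * ((1 : Module.End k C) + Sg * S.H)) - 1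
          = ((d + Sg + d * (S.H * Sg)) * S.H + S.H * (d + Sg + Sg * (S.H * d)))
              + S.H * ((d * Sg + Sg * d + Sg * Sg + Sg * (d * S.H * Sg) + Sg * (S.H * d * Sg)) * S.H) := by
            noncomm_ring
        _ = (d + Sg + d * (S.H * Sg)) * S.H + S.H * (d + Sg + Sg * (S.H * d)) := by
            rw [hX, zero_mul, mul_zero, add_zero]
        _ = ((d + δ) * ((1 : Module.End k C) + S.H * Sg)) * S.H
              + S.H * (((1 : Module.End k C) + Sg * S.H) * (d + δ)) := by
            rw [hdV, hUd]
        _ = (d + δ) * (S.H + S.H * (Sg * S.H)) + (S.H + S.H * (Sg * S.H)) * (d + δ) := by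
            noncomm_ring
    calc iP ∘ₗ pP - LinearMap.id
        = (((1 : Module.End k C) + S.H * Sg) ∘ₗ S.i) ∘ₗ (S.p ∘ₗ ((1 : Module.End k C) + Sg * S.H)) - LinearMap.id := by
          rw [hiP', hpP']
      _ = ((1 : Module.End k C) + S.H * Sg) ∘ₗ ((S.i ∘ₗ S.p) ∘ₗ ((1 : Module.End k C) + Sg * S.H)) - LinearMap.id := by
          rw [LinearMap.comp_assoc, LinearMap.comp_assoc]
      _ = ((1 : Module.End k C) + S.H * Sg) ∘ₗ (((1 : Module.End k C) + (d * S.H + S.H * d)) ∘ₗ ((1 : Module.End k C) + Sg * S.H)) - LinearMap.id := by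
          rw [hip]
      _ = (d + δ) ∘ₗ HP + HP ∘ₗ (d + δ) := by
          rw [hHPm]; exact hG4
  · -- HP ∘ iP = 0
    rw [hiP, hHP]; ext x
    simp [hHi', hHH', map_add]
  · -- pP ∘ HP = 0
    rw [hpP, hHP]; ext x
    simp [hpH', hHH', map_add]
  · -- HP ∘ HP = 0
    rw [hHP]; ext x
    simp [hHH', map_add]
end

section
/- Let (p,i,H) be a special chain contraction of (C₁,d₁) onto (C₂,d₂) and (p',i',H') a special chain contraction of (C₁',d₁') onto (C₂',d₂'). Let δ₁ and δ₁' be perturbations of d₁ and d₁' respectively such that 1 - δ₁H and 1 - δ₁'H' are invertible, with Σ = (1 - δ₁H)⁻¹δ₁ and Σ' = (1 - δ₁'H')⁻¹δ₁'. Let φ : C₁ → C₁' be a chain map with respect to the perturbed differentials, i.e. φ(d₁ + δ₁) = (d₁' + δ₁')φ, satisfying φH = H'φ. Then φ∘H̃ = H̃'∘φ, where H̃ = H + HΣH and H̃' = H' + H'Σ'H'. -/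
/-- compatibility of perturbed homotopies with a chain map. If
`φ : (C₁, d₁+δ₁) → (C₁', d₁'+δ₁')` is a chain map with `φ∘H = H'∘φ`, then
`φ ∘ H̃ = H̃' ∘ φ` where `H̃ = H + H∘Σ∘H`, `H̃' = H' + H'∘Σ'∘H'`,
`Σ = (1-δ₁∘H)⁻¹∘δ₁` and `Σ' = (1-δ₁'∘H')⁻¹∘δ₁'`. -/
theorem curved_gauge_stmt6 {k : Type*} [Field k]
    {C₁ C₂ C₁' C₂' : Type*}
    [AddCommGroup C₁] [Module k C₁] [AddCommGroup C₂] [Module k C₂]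
    [AddCommGroup C₁'] [Module k C₁'] [AddCommGroup C₂'] [Module k C₂']
    (d₁ : C₁ →ₗ[k] C₁) (d₂ : C₂ →ₗ[k] C₂)
    (d₁' : C₁' →ₗ[k] C₁') (d₂' : C₂' →ₗ[k] C₂')
    (hd₁ : d₁ ∘ₗ d₁ = 0) (hd₁' : d₁' ∘ₗ d₁' = 0)
    (S : SpecialContraction d₁ d₂) (S' : SpecialContraction d₁' d₂')
    (δ₁ : C₁ →ₗ[k] C₁) (δ₁' : C₁' →ₗ[k] C₁')
    (hpert : (d₁ + δ₁) ∘ₗ (d₁ + δ₁) = 0)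
    (hpert' : (d₁' + δ₁') ∘ₗ (d₁' + δ₁') = 0)
    (U : C₁ →ₗ[k] C₁) (U' : C₁' →ₗ[k] C₁')
    (hU₁ : (LinearMap.id - δ₁ ∘ₗ S.H) ∘ₗ U = LinearMap.id)
    (hU₂ : U ∘ₗ (LinearMap.id - δ₁ ∘ₗ S.H) = LinearMap.id)
    (hU₁' : (LinearMap.id - δ₁' ∘ₗ S'.H) ∘ₗ U' = LinearMap.id)
    (hU₂' : U' ∘ₗ (LinearMap.id - δ₁' ∘ₗ S'.H) = LinearMap.id)
    (φ : C₁ →ₗ[k] C₁')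
    (hφ : φ ∘ₗ (d₁ + δ₁) = (d₁' + δ₁') ∘ₗ φ)
    (hφH : φ ∘ₗ S.H = S'.H ∘ₗ φ) :
    φ ∘ₗ (S.H + S.H ∘ₗ (U ∘ₗ δ₁) ∘ₗ S.H)
      = (S'.H + S'.H ∘ₗ (U' ∘ₗ δ₁') ∘ₗ S'.H) ∘ₗ φ := by

  -- abbreviations
  set H := S.H with hHdef
  set H' := S'.H with hH'def
  set E : C₁ →ₗ[k] C₁' := δ₁' ∘ₗ φ - φ ∘ₗ δ₁ with hEdef
  -- U = id + U∘(δ∘H)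
  have hU : U = LinearMap.id + U ∘ₗ (δ₁ ∘ₗ H) := by
    have h := hU₂
    rw [LinearMap.comp_sub, LinearMap.comp_id] at h
    exact sub_eq_iff_eq_add.mp h
  have hU' : U' = LinearMap.id + U' ∘ₗ (δ₁' ∘ₗ H') := by
    have h := hU₂'
    rw [LinearMap.comp_sub, LinearMap.comp_id] at h
    exact sub_eq_iff_eq_add.mp h
  -- E in d-form
  have hEd : E = φ ∘ₗ d₁ - d₁' ∘ₗ φ := by
    have h := hφ
    simp only [LinearMap.comp_add, LinearMap.add_comp] at h
    rw [hEdef, sub_eq_sub_iff_add_eq_add, add_comm]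
    exact h.symm
  -- dH = ip - 1 - Hd
  have hdH : d₁ ∘ₗ H = S.i ∘ₗ S.p - LinearMap.id - H ∘ₗ d₁ :=
    eq_sub_iff_add_eq.mpr S.homotopy.symm
  have hdH' : d₁' ∘ₗ H' = S'.i ∘ₗ S'.p - LinearMap.id - H' ∘ₗ d₁' :=
    eq_sub_iff_add_eq.mpr S'.homotopy.symm
  -- key swap identity
  have key : φ ∘ₗ (LinearMap.id - δ₁ ∘ₗ H)
      = (LinearMap.id - δ₁' ∘ₗ H') ∘ₗ φ + E ∘ₗ H := by
    rw [hEdef]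
    simp only [LinearMap.comp_sub, LinearMap.sub_comp, LinearMap.comp_id,
      LinearMap.id_comp, LinearMap.comp_assoc, hφH]
    abel
  have hswap : U' ∘ₗ φ = φ ∘ₗ U + U' ∘ₗ (E ∘ₗ (H ∘ₗ U)) := by
    calc U' ∘ₗ φ = U' ∘ₗ (φ ∘ₗ ((LinearMap.id - δ₁ ∘ₗ H) ∘ₗ U)) := by
          rw [hU₁, LinearMap.comp_id]
      _ = U' ∘ₗ ((φ ∘ₗ (LinearMap.id - δ₁ ∘ₗ H)) ∘ₗ U) := by
          rw [LinearMap.comp_assoc]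
      _ = U' ∘ₗ (((LinearMap.id - δ₁' ∘ₗ H') ∘ₗ φ + E ∘ₗ H) ∘ₗ U) := by rw [key]
      _ = (U' ∘ₗ (LinearMap.id - δ₁' ∘ₗ H')) ∘ₗ (φ ∘ₗ U)
            + U' ∘ₗ (E ∘ₗ (H ∘ₗ U)) := by
          simp only [LinearMap.add_comp, LinearMap.comp_add, LinearMap.comp_assoc]
      _ = φ ∘ₗ U + U' ∘ₗ (E ∘ₗ (H ∘ₗ U)) := by rw [hU₂', LinearMap.id_comp]
  -- E∘H identity
  have hEH : E ∘ₗ H = φ ∘ₗ (S.i ∘ₗ S.p) - S'.i ∘ₗ (S'.p ∘ₗ φ) - H' ∘ₗ E := by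
    rw [hEd]
    simp only [LinearMap.sub_comp, LinearMap.comp_sub, LinearMap.comp_assoc]
    rw [hφH]
    rw [show d₁' ∘ₗ (H' ∘ₗ φ) = (d₁' ∘ₗ H') ∘ₗ φ from (LinearMap.comp_assoc _ _ _).symm]
    rw [show φ ∘ₗ (d₁ ∘ₗ H) = (φ ∘ₗ (d₁ ∘ₗ H) : C₁ →ₗ[k] C₁') from rfl]
    rw [hdH, hdH']
    simp only [LinearMap.comp_sub, LinearMap.sub_comp, LinearMap.comp_id,
      LinearMap.id_comp, LinearMap.comp_assoc, hφH]
    rw [show φ ∘ₗ (H ∘ₗ d₁) = H' ∘ₗ (φ ∘ₗ d₁) from by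
      rw [← LinearMap.comp_assoc, hφH, LinearMap.comp_assoc]]
    abel
  -- vanishing lemmas
  have hHi : H ∘ₗ S.i = 0 := by rw [hHdef]; exact S.Hi
  have hH'i : H' ∘ₗ S'.i = 0 := by rw [hH'def]; exact S'.Hi
  have hH'H' : H' ∘ₗ H' = 0 := by rw [hH'def]; exact S'.HH
  have hHφi : H' ∘ₗ (φ ∘ₗ S.i) = 0 := by
    rw [show H' ∘ₗ (φ ∘ₗ S.i) = (H' ∘ₗ φ) ∘ₗ S.i from (LinearMap.comp_assoc _ _ _).symm,
      ← hφH, LinearMap.comp_assoc, hHi, LinearMap.comp_zero]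
  have zA : H' ∘ₗ (U' ∘ₗ (φ ∘ₗ S.i)) = 0 := by
    conv_lhs => rw [hU']
    simp only [LinearMap.add_comp, LinearMap.id_comp, LinearMap.comp_add,
      LinearMap.comp_assoc, hHφi, LinearMap.comp_zero, add_zero]
  have zB : H' ∘ₗ (U' ∘ₗ S'.i) = 0 := by
    conv_lhs => rw [hU']
    simp only [LinearMap.add_comp, LinearMap.id_comp, LinearMap.comp_add,
      LinearMap.comp_assoc, hH'i, LinearMap.comp_zero, add_zero]
  have zC : H' ∘ₗ (U' ∘ₗ H') = 0 := by
    conv_lhs => rw [hU']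
    simp only [LinearMap.add_comp, LinearMap.id_comp, LinearMap.comp_add,
      LinearMap.comp_assoc, hH'H', LinearMap.comp_zero, add_zero]
  -- composed vanishing
  have t1 : H' ∘ₗ (U' ∘ₗ (φ ∘ₗ (S.i ∘ₗ (S.p ∘ₗ U)))) = 0 := by
    have h := congrArg (fun f => f ∘ₗ (S.p ∘ₗ U)) zA
    simpa only [LinearMap.comp_assoc, LinearMap.zero_comp] using h
  have t2 : H' ∘ₗ (U' ∘ₗ (S'.i ∘ₗ (S'.p ∘ₗ (φ ∘ₗ U)))) = 0 := by
    have h := congrArg (fun f => f ∘ₗ (S'.p ∘ₗ (φ ∘ₗ U))) zB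
    simpa only [LinearMap.comp_assoc, LinearMap.zero_comp] using h
  have t3 : H' ∘ₗ (U' ∘ₗ (H' ∘ₗ (E ∘ₗ U))) = 0 := by
    have h := congrArg (fun f => f ∘ₗ (E ∘ₗ U)) zC
    simpa only [LinearMap.comp_assoc, LinearMap.zero_comp] using h
  have Z : H' ∘ₗ (U' ∘ₗ (E ∘ₗ (H ∘ₗ U))) = 0 := by
    rw [show E ∘ₗ (H ∘ₗ U) = (E ∘ₗ H) ∘ₗ U from (LinearMap.comp_assoc _ _ _).symm,
      hEH]
    simp only [LinearMap.sub_comp, LinearMap.comp_sub, LinearMap.comp_assoc]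
    rw [t1, t2, t3]
    simp
  -- assemble
  have lhs_eq : H ∘ₗ U = H + H ∘ₗ ((U ∘ₗ δ₁) ∘ₗ H) := by
    conv_lhs => rw [hU]
    simp only [LinearMap.comp_add, LinearMap.comp_id, LinearMap.comp_assoc]
  have rhs_eq : H' ∘ₗ U' = H' + H' ∘ₗ ((U' ∘ₗ δ₁') ∘ₗ H') := by
    conv_lhs => rw [hU']
    simp only [LinearMap.comp_add, LinearMap.comp_id, LinearMap.comp_assoc]
  calc φ ∘ₗ (H + H ∘ₗ (U ∘ₗ δ₁) ∘ₗ H) = φ ∘ₗ (H ∘ₗ U) := by rw [lhs_eq]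
    _ = (φ ∘ₗ H) ∘ₗ U := (LinearMap.comp_assoc _ _ _).symm
    _ = (H' ∘ₗ φ) ∘ₗ U := by rw [hφH]
    _ = H' ∘ₗ (φ ∘ₗ U) := LinearMap.comp_assoc _ _ _
    _ = H' ∘ₗ (U' ∘ₗ φ) := by
        rw [hswap, LinearMap.comp_add, Z, add_zero]
    _ = (H' ∘ₗ U') ∘ₗ φ := (LinearMap.comp_assoc _ _ _).symm
    _ = (H' + H' ∘ₗ (U' ∘ₗ δ₁') ∘ₗ H') ∘ₗ φ := by rw [rhs_eq]
end
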